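/- A single saferAd-CP admission step never turns a residential transaction into a future transaction: for any state st, any arriving transaction ta ∉ st, and any transaction tx that belongs both to st and to the resulting state adTx(st, ta), every transaction tx'' ∈ st that is an ancestor of tx also belongs to adTx(st, ta). -/
import Mathlib


/-- A transaction: sender, nonce (naturals) and a nonnegative rational price. -/
structure Tx where
  sender : ℕ
  nonce : ℕ
  price : ℚ≥0
deriving DecidableEq

instance : DecidableRel ((· ≤ ·) : ℚ≥0 → ℚ≥0 → Prop) :=
  fun a b => decidable_of_iff ((a : ℚ) ≤ (b : ℚ)) (by exact_mod_cast Iff.rfl)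

/-- `tx₁` is an ancestor of `tx₂`. -/
def Ancestor (tx₁ tx₂ : Tx) : Prop :=
  tx₁.sender = tx₂.sender ∧ tx₁.nonce < tx₂.nonce

instance (tx₁ tx₂ : Tx) : Decidable (Ancestor tx₁ tx₂) :=
  decidable_of_iff (tx₁.sender = tx₂.sender ∧ tx₁.nonce < tx₂.nonce) Iff.rfl

/-- `te` is a childless transaction in the mempool state `st`. -/
def Childless (te : Tx) (st : Finset Tx) : Prop :=
  te ∈ st ∧ ∀ tx ∈ st, ¬ Ancestor te tx

/-- `pick` selects, from any nonempty mempool state, a childless transaction of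
minimum price among the childless transactions of the state. -/
def ValidPick (pick : Finset Tx → Tx) : Prop :=
  ∀ st : Finset Tx, st.Nonempty →
    Childless (pick st) st ∧ ∀ tx : Tx, Childless tx st → (pick st).price ≤ tx.price

/-- The saferAd-CP admission step with capacity `m`, eviction candidate chosen by `pick`. -/
def adTx (m : ℕ) (pick : Finset Tx → Tx) (st : Finset Tx) (ta : Tx) : Finset Tx :=
  if st.card < m then insert ta st
  else if ta.price ≤ (pick st).price then st
  else insert ta (st.erase (pick st))

/-- The state after processing the list of arriving transactions `ops` from `st₀`. -/
def run (m : ℕ) (pick : Finset Tx → Tx) (st₀ : Finset Tx) (ops : List Tx) : Finset Tx :=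
  ops.foldl (adTx m pick) st₀

/-- A single saferAd-CP admission step never turns a residential
transaction into a future transaction: any in-pool ancestor of a transaction
surviving the step also survives the step. -/
theorem adTx_no_future (m : ℕ) (pick : Finset Tx → Tx) (hpick : ValidPick pick)
    (st : Finset Tx) (ta : Tx) (hta : ta ∉ st)
    (tx : Tx) (htx : tx ∈ st) (htx' : tx ∈ adTx m pick st ta)
    (tx'' : Tx) (htx'' : tx'' ∈ st) (hanc : Ancestor tx'' tx) :
    tx'' ∈ adTx m pick st ta := by
  unfold adTx
  split_ifs with h1 h2
  · exact Finset.mem_insert_of_mem htx''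
  · exact htx''
  · apply Finset.mem_insert_of_mem
    refine Finset.mem_erase.mpr ⟨?_, htx''⟩
    intro heq
    have hne : st.Nonempty := ⟨tx, htx⟩
    have hcl := (hpick st hne).1
    exact hcl.2 tx htx (heq ▸ hanc)
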